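/- arXiv:2112.13579 — 4 statements merged into one kernel-verified Lean document; each statement's English description precedes it below -/
import Mathlib

section
/- Let f = f(t) be a nonnegative function on [0,∞) satisfying ∫₀^∞ f(τ) dτ < C₀ for some constant C₀ > 0, and f(t) ≤ C₁ f(s) for all 0 ≤ s < t for some constant C₁ > 0. Then for C₂ = max{2 C₁ f(0), 4 C₀ C₁} and for any t > 0, f(t) ≤ C₂ (1+t)^{-1}. -/
open MeasureTheory Set

/- If `f t ≤ C₁ f s` for `s < t`, then `f` is at least `f t / C₁` on `[t/2, t)`, so
`t f(t) ≤ 2 C₁ ∫₀^∞ f < 2 C₀ C₁`; since `t ≥ (1 + t)/2` for `t ≥ 1`, this gives the bound for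
large `t`, while for `t ≤ 1` the bound `f t ≤ C₁ f 0` suffices. -/

section QuasiAntitone

variable {f : ℝ → ℝ} {C : ℝ}

theorem sub_mul_le_mul_setIntegral_Ico (hC : 0 < C) {a b : ℝ} (hab : a ≤ b)
    (hf : IntegrableOn f (Ico a b)) (hle : ∀ s ∈ Ico a b, f b ≤ C * f s) :
    (b - a) * f b ≤ C * ∫ s in Ico a b, f s := by
  have hlower : f b / C * (b - a) ≤ ∫ s in Ico a b, f s := by
    simpa [Real.volume_real_Ico_of_le hab] using
      setIntegral_ge_of_const_le_real measurableSet_Ico (by simp)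
        (fun s hs => (div_le_iff₀' hC).2 (hle s hs)) hf
  calc (b - a) * f b = C * (f b / C * (b - a)) := by field_simp
    _ ≤ C * ∫ s in Ico a b, f s := by gcongr

theorem mul_le_setIntegral_Ici_of_le_mul (hC : 0 < C) (hnonneg : ∀ t, 0 ≤ t → 0 ≤ f t)
    (hint : IntegrableOn f (Ici 0)) (hmono : ∀ s t : ℝ, 0 ≤ s → s < t → f t ≤ C * f s)
    {t : ℝ} (ht : 0 < t) :
    t * f t ≤ 2 * C * ∫ τ in Ici (0:ℝ), f τ := by
  have hsub : Ico (t / 2) t ⊆ Ici 0 := fun s hs => le_trans (by linarith) hs.1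
  have hIco := sub_mul_le_mul_setIntegral_Ico hC (by linarith) (hint.mono_set hsub)
    fun s hs => hmono s t (le_trans (by linarith) hs.1) hs.2
  have hmono_set : ∫ τ in Ico (t / 2) t, f τ ≤ ∫ τ in Ici (0:ℝ), f τ :=
    setIntegral_mono_set hint
      (by filter_upwards [ae_restrict_mem measurableSet_Ici] with s hs using hnonneg s hs)
      (Filter.Eventually.of_forall hsub)
  nlinarith

end QuasiAntitone

theorem decay_rate_general (f : ℝ → ℝ) (C₀ C₁ : ℝ) (hC₁ : 0 < C₁)
    (hnonneg : ∀ t, 0 ≤ t → 0 ≤ f t)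
    (hint : IntegrableOn f (Ici 0))
    (hbound : ∫ τ in Ici (0:ℝ), f τ < C₀)
    (hmono : ∀ s t : ℝ, 0 ≤ s → s < t → f t ≤ C₁ * f s) :
    ∀ t : ℝ, 0 < t → f t ≤ max (2 * C₁ * f 0) (4 * C₀ * C₁) * (1 + t)⁻¹ := by
  intro t ht
  have hf0 : 0 ≤ f 0 := hnonneg 0 le_rfl
  have hft : 0 ≤ f t := hnonneg t ht.le
  rcases le_or_gt t 1 with ht1 | ht1
  · calc f t ≤ 2 * C₁ * f 0 * (1 + t)⁻¹ := by
          rw [← div_eq_mul_inv, le_div_iff₀ (by linarith)]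
          nlinarith [hmono 0 t le_rfl ht, mul_nonneg hC₁.le hf0]
      _ ≤ max (2 * C₁ * f 0) (4 * C₀ * C₁) * (1 + t)⁻¹ := by gcongr; exact le_max_left _ _
  · have hI : 0 ≤ ∫ τ in Ici (0:ℝ), f τ := setIntegral_nonneg measurableSet_Ici hnonneg
    have hdecay := mul_le_setIntegral_Ici_of_le_mul hC₁ hnonneg hint hmono ht
    calc f t ≤ 4 * C₀ * C₁ * (1 + t)⁻¹ := by
          rw [← div_eq_mul_inv, le_div_iff₀ (by linarith)]
          nlinarith [mul_lt_mul_of_pos_left hbound hC₁]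
      _ ≤ max (2 * C₁ * f 0) (4 * C₀ * C₁) * (1 + t)⁻¹ := by gcongr; exact le_max_right _ _

/-- Lemma 2.6: explicit decay rate for a nonnegative integrable function that is
decreasing in a generalized sense. -/
theorem decay_rate (f : ℝ → ℝ) (C₀ C₁ : ℝ) (hC₀ : 0 < C₀) (hC₁ : 0 < C₁)
    (hnonneg : ∀ t, 0 ≤ t → 0 ≤ f t)
    (hint : IntegrableOn f (Ici 0))
    (hbound : ∫ τ in Ici (0:ℝ), f τ < C₀)
    (hmono : ∀ s t : ℝ, 0 ≤ s → s < t → f t ≤ C₁ * f s) :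
    ∀ t : ℝ, 0 < t → f t ≤ max (2 * C₁ * f 0) (4 * C₀ * C₁) * (1 + t)⁻¹ :=
  decay_rate_general f C₀ C₁ hC₁ hnonneg hint hbound hmono
end

section
/- Let Ω = 𝕋 × ℝ and let f̃ denote the oscillation part of f (f̃ = f − f̄ with f̄ the horizontal average). If ∂₁ f̃ ∈ H¹(Ω), then ‖f̃‖_{L^∞(Ω)} ≤ C ‖∂₁ f̃‖_{H¹(Ω)} for an absolute constant C. -/
open MeasureTheory Set

/-- The measure on Ω = 𝕋 × ℝ (with 𝕋 = [0,1] the 1D periodic box), modeled as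
Lebesgue measure on the fundamental strip (0,1] × ℝ ⊆ ℝ². Functions on Ω are
modeled as functions on ℝ² that are 1-periodic in the first variable. -/
noncomputable def μΩ : Measure (ℝ × ℝ) := (volume.restrict (Set.Ioc (0:ℝ) 1)).prod volume

/-- The horizontal average f̄(x₂) = ∫_𝕋 f(x₁, x₂) dx₁. -/
noncomputable def havg (f : ℝ × ℝ → ℝ) (y : ℝ) : ℝ := ∫ t in (0:ℝ)..1, f (t, y)

/-- The oscillation part f̃ = f − f̄. -/
noncomputable def osc (f : ℝ × ℝ → ℝ) (x : ℝ × ℝ) : ℝ := f x - havg f x.2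

/-!
Fix the height `x₂`. The slice `t ↦ f̃ (t, x₂)` is `1`-periodic with mean zero, so `f̃ (x₁, x₂)`
is the average over `s ∈ [0, 1]` of `f̃ (x₁, x₂) - f̃ (s, x₂)`, each of which is bounded by
`∫₀¹ |∂₁f̃ (t, x₂)| dt`; by Jensen, `f̃ (x₁, x₂)² ≤ ∫₀¹ ∂₁f̃ (t, x₂)² dt`. For a function `u` on `ℝ`
with `u, u' ∈ L²`, `u²` tends to `0` at `-∞`, so `u (b)² = ∫_{-∞}^b 2 u u' ≤ ‖u‖₂² + ‖u'‖₂²`.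
Applied to `u = ∂₁f̃ (t, ·)` and integrated over `t`, this bounds the slice integral by
`‖∂₁f̃‖₂² + ‖∂₂∂₁f̃‖₂²`, so `C = 1` works.
-/
open Filter Topology Function
open scoped Interval

lemma sq_toReal_eLpNorm_two {α E : Type*} [MeasurableSpace α] [NormedAddCommGroup E]
    {μ : Measure α} {f : α → E} (hf : AEStronglyMeasurable f μ) :
    (eLpNorm f 2 μ).toReal ^ 2 = ∫ x, ‖f x‖ ^ 2 ∂μ := by
  rw [toReal_eLpNorm hf, lpNorm_eq_integral_norm_rpow_toReal two_ne_zero ENNReal.ofNat_ne_top hf,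
    ENNReal.toReal_ofNat]
  simp_rw [Real.rpow_two]
  exact_mod_cast Real.rpow_inv_natCast_pow (integral_nonneg fun x => by positivity) two_ne_zero

lemma sq_le_integral_sq_add_integral_deriv_sq {u u' : ℝ → ℝ} (hu : ∀ s, HasDerivAt u (u' s) s)
    (hu_sq : Integrable (fun s => u s ^ 2)) (hu'_sq : Integrable (fun s => u' s ^ 2)) (b : ℝ) :
    u b ^ 2 ≤ (∫ s, u s ^ 2) + ∫ s, u' s ^ 2 := by
  have hu_cont : Continuous u := continuous_iff_continuousAt.2 fun s => (hu s).continuousAt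
  have hu'_meas : Measurable u' := by
    rw [show u' = deriv u from funext fun s => (hu s).deriv.symm]
    exact measurable_deriv u
  have hderiv : ∀ s, HasDerivAt (fun t => u t ^ 2) (2 * u s * u' s) s := fun s => by
    simpa using (hu s).fun_pow 2
  have hbound : ∀ s, ‖2 * u s * u' s‖ ≤ u s ^ 2 + u' s ^ 2 := fun s => by
    rw [Real.norm_eq_abs, abs_le]
    constructor <;> nlinarith [sq_nonneg (u s + u' s), sq_nonneg (u s - u' s)]
  have hint : Integrable fun s => 2 * u s * u' s :=
    (hu_sq.add hu'_sq).mono' (by fun_prop) (ae_of_all _ hbound)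
  have hlim : Tendsto (fun t => u t ^ 2) atBot (𝓝 0) :=
    tendsto_zero_of_hasDerivAt_of_integrableOn_Iic (a := b) (fun s _ => hderiv s)
      hint.integrableOn hu_sq.integrableOn
  calc u b ^ 2 = ∫ s in Iic b, 2 * u s * u' s := by
        rw [integral_Iic_of_hasDerivAt_of_tendsto' (fun s _ => hderiv s) hint.integrableOn hlim,
          sub_zero]
    _ ≤ ∫ s in Iic b, (u s ^ 2 + u' s ^ 2) :=
        setIntegral_mono hint.integrableOn (hu_sq.add hu'_sq).integrableOn
          fun s => (le_abs_self _).trans (hbound s)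
    _ ≤ ∫ s, (u s ^ 2 + u' s ^ 2) :=
        setIntegral_le_integral (hu_sq.add hu'_sq) (ae_of_all _ fun s => by positivity)
    _ = (∫ s, u s ^ 2) + ∫ s, u' s ^ 2 := integral_add hu_sq hu'_sq

lemma integral_sq_slice_le_integral_sq_add_integral_deriv_sq {α : Type*} [MeasurableSpace α]
    {ν : Measure α} [SFinite ν] {u u₂ : α × ℝ → ℝ}
    (hu : ∀ x, HasDerivAt (fun s => u (x.1, s)) (u₂ x) x.2)
    (hu_sq : Integrable (fun x => u x ^ 2) (ν.prod volume))
    (hu₂_sq : Integrable (fun x => u₂ x ^ 2) (ν.prod volume)) (b : ℝ) :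
    ∫ r, u (r, b) ^ 2 ∂ν ≤ (∫ x, u x ^ 2 ∂(ν.prod volume)) + ∫ x, u₂ x ^ 2 ∂(ν.prod volume) := by
  rw [integral_prod _ hu_sq, integral_prod _ hu₂_sq,
    ← integral_add hu_sq.integral_prod_left hu₂_sq.integral_prod_left]
  refine integral_mono_of_nonneg (ae_of_all _ fun r => sq_nonneg _)
    (hu_sq.integral_prod_left.add hu₂_sq.integral_prod_left) ?_
  filter_upwards [hu_sq.prod_right_ae, hu₂_sq.prod_right_ae] with r hr hr₂
  exact sq_le_integral_sq_add_integral_deriv_sq (fun s => hu (r, s)) hr hr₂ b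

lemma abs_le_integral_abs_deriv_of_intervalIntegral_eq_zero {g g' : ℝ → ℝ}
    (hg : ∀ s, HasDerivAt g (g' s) s) (hg' : Continuous g')
    (hmean : ∫ s in (0:ℝ)..1, g s = 0) {a : ℝ} (ha : a ∈ Icc (0:ℝ) 1) :
    |g a| ≤ ∫ s in Ioc (0:ℝ) 1, |g' s| := by
  have hg_cont : Continuous g := continuous_iff_continuousAt.2 fun s => (hg s).continuousAt
  have hdiff : ∀ s ∈ Ι (0:ℝ) 1, ‖g a - g s‖ ≤ ∫ r in Ioc (0:ℝ) 1, |g' r| := by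
    intro s hs
    rw [uIoc_of_le zero_le_one] at hs
    have hsub : Ι s a ⊆ Ioc (0:ℝ) 1 := by
      rw [uIoc]
      exact Ioc_subset_Ioc (le_min hs.1.le ha.1) (max_le hs.2 ha.2)
    rw [← intervalIntegral.integral_eq_sub_of_hasDerivAt (fun r _ => hg r)
      (hg'.intervalIntegrable s a)]
    calc ‖∫ r in s..a, g' r‖ ≤ ∫ r in Ι s a, ‖g' r‖ :=
          intervalIntegral.norm_integral_le_integral_norm_uIoc
      _ ≤ ∫ r in Ioc (0:ℝ) 1, |g' r| :=
          setIntegral_mono_set hg'.abs.integrableOn_Ioc (ae_of_all _ fun r => abs_nonneg _)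
            hsub.eventuallyLE
  have hga : g a = ∫ s in (0:ℝ)..1, (g a - g s) := by
    rw [intervalIntegral.integral_sub intervalIntegrable_const (hg_cont.intervalIntegrable 0 1),
      hmean]
    simp
  have := intervalIntegral.norm_integral_le_of_norm_le_const hdiff
  rwa [← hga, Real.norm_eq_abs, sub_zero, abs_one, mul_one] at this

lemma sq_setIntegral_abs_le_setIntegral_sq {h : ℝ → ℝ} (hh : Continuous h) :
    (∫ s in Ioc (0:ℝ) 1, |h s|) ^ 2 ≤ ∫ s in Ioc (0:ℝ) 1, h s ^ 2 := by
  have : IsProbabilityMeasure (volume.restrict (Ioc (0:ℝ) 1)) := ⟨by simp⟩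
  simpa using (even_two.convexOn_pow (𝕜 := ℝ)).map_integral_le (continuous_pow 2).continuousOn
    isClosed_univ (ae_of_all _ fun _ => mem_univ _) hh.abs.integrableOn_Ioc
    (hh.abs.pow 2).integrableOn_Ioc

lemma Function.Periodic.sq_le_setIntegral_deriv_sq_of_integral_eq_zero {g g' : ℝ → ℝ}
    (hper : Periodic g 1) (hg : ∀ s, HasDerivAt g (g' s) s) (hg' : Continuous g')
    (hmean : ∫ s in (0:ℝ)..1, g s = 0) (a : ℝ) :
    g a ^ 2 ≤ ∫ s in Ioc (0:ℝ) 1, g' s ^ 2 := by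
  obtain ⟨a₀, ha₀, hga⟩ := hper.exists_mem_Ico₀ one_pos a
  calc g a ^ 2 = |g a₀| ^ 2 := by rw [hga, sq_abs]
    _ ≤ (∫ s in Ioc (0:ℝ) 1, |g' s|) ^ 2 := by
        gcongr
        exact abs_le_integral_abs_deriv_of_intervalIntegral_eq_zero hg hg' hmean
          (Ico_subset_Icc_self ha₀)
    _ ≤ ∫ s in Ioc (0:ℝ) 1, g' s ^ 2 := sq_setIntegral_abs_le_setIntegral_sq hg'

lemma osc_periodic {f : ℝ × ℝ → ℝ} (hf : ∀ x : ℝ × ℝ, f (x.1 + 1, x.2) = f x) (y : ℝ) :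
    Periodic (fun t => osc f (t, y)) 1 := fun t => by
  simp only [osc, hf (t, y)]

lemma intervalIntegral_osc_eq_zero {f : ℝ × ℝ → ℝ} {y : ℝ}
    (hf : IntegrableOn (fun t => f (t, y)) (Ioc (0:ℝ) 1)) :
    ∫ t in (0:ℝ)..1, osc f (t, y) = 0 := by
  have hf' : IntervalIntegrable (fun t => f (t, y)) volume 0 1 :=
    (intervalIntegrable_iff_integrableOn_Ioc_of_le zero_le_one).2 hf
  simp only [osc]
  rw [intervalIntegral.integral_sub hf' intervalIntegrable_const]
  simp [havg]

/-- L^∞ Poincaré-type bound for the oscillation part: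
‖f̃‖_{L^∞(Ω)} ≤ C ‖∂₁f̃‖_{H¹(Ω)} for an absolute constant C,
where ‖g‖_{H¹}² = ‖g‖_{L²}² + ‖∂₁g‖_{L²}² + ‖∂₂g‖_{L²}². -/
theorem osc_linfty_le_H1 :
    ∃ C : ℝ, 0 < C ∧ ∀ (f t1 t11 t12 : ℝ × ℝ → ℝ),
      (∀ x : ℝ × ℝ, f (x.1 + 1, x.2) = f x) →
      (∀ y : ℝ, IntegrableOn (fun t => f (t, y)) (Ioc (0:ℝ) 1)) →
      (∀ x : ℝ × ℝ, HasDerivAt (fun t => osc f (t, x.2)) (t1 x) x.1) →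
      (∀ x : ℝ × ℝ, HasDerivAt (fun t => t1 (t, x.2)) (t11 x) x.1) →
      (∀ x : ℝ × ℝ, HasDerivAt (fun s => t1 (x.1, s)) (t12 x) x.2) →
      MemLp t1 2 μΩ → MemLp t11 2 μΩ → MemLp t12 2 μΩ →
      ∀ x : ℝ × ℝ, |osc f x| ≤
        C * Real.sqrt ((eLpNorm t1 2 μΩ).toReal ^ 2 + (eLpNorm t11 2 μΩ).toReal ^ 2 +
          (eLpNorm t12 2 μΩ).toReal ^ 2) := by
  refine ⟨1, one_pos, fun f t1 t11 t12 hper hint ht1 ht11 ht12 hm1 _ hm12 x => ?_⟩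
  have ht1_cont : Continuous fun r => t1 (r, x.2) :=
    continuous_iff_continuousAt.2 fun r => (ht11 (r, x.2)).continuousAt
  have hpoincare : osc f x ^ 2 ≤ ∫ r in Ioc (0:ℝ) 1, t1 (r, x.2) ^ 2 :=
    (osc_periodic hper x.2).sq_le_setIntegral_deriv_sq_of_integral_eq_zero
      (fun s => ht1 (s, x.2)) ht1_cont (intervalIntegral_osc_eq_zero (hint x.2)) x.1
  have hslice : ∫ r in Ioc (0:ℝ) 1, t1 (r, x.2) ^ 2 ≤ (∫ y, t1 y ^ 2 ∂μΩ) + ∫ y, t12 y ^ 2 ∂μΩ :=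
    integral_sq_slice_le_integral_sq_add_integral_deriv_sq ht12 hm1.integrable_sq
      hm12.integrable_sq x.2
  rw [one_mul, sq_toReal_eLpNorm_two hm1.1, sq_toReal_eLpNorm_two hm12.1]
  refine Real.abs_le_sqrt ?_
  simp only [Real.norm_eq_abs, sq_abs]
  linarith [sq_nonneg (eLpNorm t11 2 μΩ).toReal]
end

section
/- Let Ω = 𝕋 × ℝ. There is a constant C such that for any f ∈ H²(Ω), ‖f‖_{L^∞(Ω)} ≤ C ‖f‖_{L²}^{1/4} (‖f‖_{L²} + ‖∂₁f‖_{L²})^{1/4} ‖∂₂f‖_{L²}^{1/4} (‖∂₂f‖_{L²} + ‖∂₁∂₂f‖_{L²})^{1/4}. -/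
/-!
In the periodic direction, the fundamental theorem of calculus for `f²` on a unit interval,
averaged over the starting point, gives `|f(t,s)|² ≤ ∫₀¹ (|f|² + 2|f ∂₁f|)(τ,s) dτ`; integrating in
`s` bounds every vertical slice, `‖f(t,·)‖²_{L²(ℝ)} ≤ 2‖f‖(‖f‖ + ‖∂₁f‖)`, and likewise for `∂₂f`.
In the real direction, `f(t,·)²` is integrable, hence takes arbitrarily small values, so the
one-dimensional Agmon inequality `|f(t,y)|² ≤ 2‖f(t,·)‖_{L²}‖∂₂f(t,·)‖_{L²}` holds. Together,
`|f(t,y)|⁴ ≤ 16‖f‖(‖f‖ + ‖∂₁f‖)‖∂₂f‖(‖∂₂f‖ + ‖∂₁∂₂f‖)`, which is the claim with `C = 2`.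
-/

open MeasureTheory Set

open scoped ENNReal Interval

theorem sq_eLpNorm_two {α E : Type*} [MeasurableSpace α] [NormedAddCommGroup E] {μ : Measure α}
    (g : α → E) :
    eLpNorm g 2 μ ^ 2 = ∫⁻ x, ‖g x‖ₑ ^ 2 ∂μ := by
  simpa using eLpNorm_nnreal_pow_eq_lintegral (f := g) (μ := μ) (p := 2) two_ne_zero

theorem lintegral_enorm_mul_le_eLpNorm_mul_eLpNorm {α E F : Type*} [MeasurableSpace α]
    [NormedAddCommGroup E] [NormedAddCommGroup F] {μ : Measure α} {g : α → E} {h : α → F}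
    (hg : AEStronglyMeasurable g μ) (hh : AEStronglyMeasurable h μ) :
    ∫⁻ x, ‖g x‖ₑ * ‖h x‖ₑ ∂μ ≤ eLpNorm g 2 μ * eLpNorm h 2 μ := by
  simpa [eLpNorm_eq_lintegral_rpow_enorm_toReal two_ne_zero ENNReal.ofNat_ne_top] using
    ENNReal.lintegral_mul_le_Lp_mul_Lq μ Real.HolderConjugate.two_two hg.enorm hh.enorm

lemma enorm_two_mul_mul (u v : ℝ) : ‖2 * (u * v)‖ₑ = 2 * (‖u‖ₑ * ‖v‖ₑ) := by
  rw [enorm_mul, enorm_mul, show (2 : ℝ) = (2 : ℕ) by norm_num, Real.enorm_natCast]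
  rfl

section

variable {g g' : ℝ → ℝ}

theorem measurable_of_forall_hasDerivAt (hg : ∀ x, HasDerivAt g (g' x) x) : Measurable g' := by
  rw [show g' = deriv g from funext fun x => ((hg x).deriv).symm]
  exact measurable_deriv g

theorem continuous_of_forall_hasDerivAt (hg : ∀ x, HasDerivAt g (g' x) x) : Continuous g :=
  continuous_iff_continuousAt.2 fun x => (hg x).continuousAt

theorem enorm_sq_le_enorm_sq_add_two_mul_lintegral (hg : ∀ x, HasDerivAt g (g' x) x) (a b : ℝ) :
    ‖g b‖ₑ ^ 2 ≤ ‖g a‖ₑ ^ 2 + 2 * ∫⁻ x in Ι a b, ‖g x‖ₑ * ‖g' x‖ₑ := by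
  rcases eq_top_or_lt_top (∫⁻ x in Ι a b, ‖g x‖ₑ * ‖g' x‖ₑ) with hI | hI
  · simp [hI]
  have hsq : ∀ x, HasDerivAt (fun x => g x ^ 2) (2 * (g x * g' x)) x := fun x =>
    ((hg x).fun_pow 2).congr_deriv (by ring)
  have hint : IntervalIntegrable (fun x => 2 * (g x * g' x)) volume a b := by
    rw [intervalIntegrable_iff]
    refine ⟨((continuous_of_forall_hasDerivAt hg).measurable.mul
      (measurable_of_forall_hasDerivAt hg)).const_mul 2 |>.aestronglyMeasurable, ?_⟩
    simp only [HasFiniteIntegral, enorm_two_mul_mul, lintegral_const_mul' _ _ ENNReal.ofNat_ne_top]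
    exact ENNReal.mul_lt_top ENNReal.ofNat_lt_top hI
  calc ‖g b‖ₑ ^ 2 = ‖g a ^ 2 + ∫ x in a..b, 2 * (g x * g' x)‖ₑ := by
        rw [intervalIntegral.integral_eq_sub_of_hasDerivAt (fun x _ => hsq x) hint,
          add_sub_cancel, enorm_pow]
    _ ≤ ‖g a‖ₑ ^ 2 + ‖∫ x in Ι a b, 2 * (g x * g' x)‖ₑ := by
        rw [← enorm_pow, ← enorm_norm (∫ x in Ι a b, _),
          ← intervalIntegral.norm_integral_eq_norm_integral_uIoc, enorm_norm]
        exact enorm_add_le _ _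
    _ ≤ ‖g a‖ₑ ^ 2 + 2 * ∫⁻ x in Ι a b, ‖g x‖ₑ * ‖g' x‖ₑ := by
        grw [enorm_integral_le_lintegral_enorm]
        simp only [enorm_two_mul_mul, lintegral_const_mul' _ _ ENNReal.ofNat_ne_top, le_refl]

theorem enorm_sq_le_lintegral_Ioc_zero_one (hg : ∀ x, HasDerivAt g (g' x) x) {t : ℝ}
    (ht : t ∈ Ioc (0:ℝ) 1) :
    ‖g t‖ₑ ^ 2 ≤ ∫⁻ x in Ioc (0:ℝ) 1, (‖g x‖ₑ ^ 2 + 2 * (‖g x‖ₑ * ‖g' x‖ₑ)) := by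
  have hvol : volume (Ioc (0:ℝ) 1) = 1 := by simp
  have hsq_meas : Measurable fun x => ‖g x‖ₑ ^ 2 :=
    (continuous_of_forall_hasDerivAt hg).measurable.enorm.pow_const 2
  calc ‖g t‖ₑ ^ 2 = ∫⁻ _ in Ioc (0:ℝ) 1, ‖g t‖ₑ ^ 2 := by simp [hvol]
    _ ≤ ∫⁻ s in Ioc (0:ℝ) 1,
          (‖g s‖ₑ ^ 2 + 2 * ∫⁻ x in Ioc (0:ℝ) 1, ‖g x‖ₑ * ‖g' x‖ₑ) := by
        refine setLIntegral_mono' measurableSet_Ioc fun s hs => ?_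
        grw [enorm_sq_le_enorm_sq_add_two_mul_lintegral hg s t]
        gcongr
        exact Ioc_subset_Ioc (le_min hs.1.le ht.1.le) (max_le hs.2 ht.2)
    _ = _ := by
        rw [lintegral_add_left hsq_meas, lintegral_add_left hsq_meas, setLIntegral_const, hvol,
          mul_one, lintegral_const_mul' _ _ ENNReal.ofNat_ne_top]

theorem enorm_sq_le_two_mul_lintegral (hg : ∀ x, HasDerivAt g (g' x) x)
    (hfin : ∫⁻ x, ‖g x‖ₑ ^ 2 ≠ ∞) (y : ℝ) :
    ‖g y‖ₑ ^ 2 ≤ 2 * ∫⁻ x, ‖g x‖ₑ * ‖g' x‖ₑ := by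
  refine ENNReal.le_of_forall_pos_le_add fun ε hε _ => ?_
  obtain ⟨z, hz⟩ : ∃ z, ‖g z‖ₑ ^ 2 < ε := by
    by_contra! hbig
    refine hfin (top_le_iff.1 ?_)
    calc ∞ = ∫⁻ _ : ℝ, (ε : ℝ≥0∞) := by simp [ENNReal.coe_ne_zero.2 hε.ne']
      _ ≤ ∫⁻ x, ‖g x‖ₑ ^ 2 := lintegral_mono hbig
  calc ‖g y‖ₑ ^ 2 ≤ ‖g z‖ₑ ^ 2 + 2 * ∫⁻ x in Ι z y, ‖g x‖ₑ * ‖g' x‖ₑ :=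
        enorm_sq_le_enorm_sq_add_two_mul_lintegral hg z y
    _ ≤ ε + 2 * ∫⁻ x, ‖g x‖ₑ * ‖g' x‖ₑ := by
        gcongr
        exact Measure.restrict_le_self
    _ = _ := add_comm _ _

theorem enorm_sq_le_two_mul_eLpNorm_mul_eLpNorm (hg : ∀ x, HasDerivAt g (g' x) x)
    (hfin : eLpNorm g 2 volume ≠ ∞) (y : ℝ) :
    ‖g y‖ₑ ^ 2 ≤ 2 * (eLpNorm g 2 volume * eLpNorm g' 2 volume) := by
  have hsq_fin : ∫⁻ x, ‖g x‖ₑ ^ 2 ≠ ∞ := by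
    rw [← sq_eLpNorm_two]
    exact ENNReal.pow_ne_top hfin
  grw [enorm_sq_le_two_mul_lintegral hg hsq_fin y, lintegral_enorm_mul_le_eLpNorm_mul_eLpNorm
      (continuous_of_forall_hasDerivAt hg).aestronglyMeasurable
      (measurable_of_forall_hasDerivAt hg).aestronglyMeasurable]

end

theorem rpow_one_div_four_pow_four {x : ℝ} (hx : 0 ≤ x) : (x ^ ((1:ℝ)/4)) ^ 4 = x := by
  rw [← Real.rpow_natCast, ← Real.rpow_mul hx]; norm_num

theorem le_ofReal_of_pow_four_le {x a a₁ b b₁ : ℝ≥0∞} (ha : a ≠ ∞) (ha₁ : a₁ ≠ ∞) (hb : b ≠ ∞)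
    (hb₁ : b₁ ≠ ∞) (h : x ^ 4 ≤ 16 * (a * (a + a₁)) * (b * (b + b₁))) :
    x ≤ ENNReal.ofReal (2 * a.toReal ^ ((1:ℝ)/4) * (a.toReal + a₁.toReal) ^ ((1:ℝ)/4) *
      b.toReal ^ ((1:ℝ)/4) * (b.toReal + b₁.toReal) ^ ((1:ℝ)/4)) := by
  rw [← ENNReal.pow_le_pow_left_iff four_ne_zero, ← ENNReal.ofReal_pow (by positivity)]
  convert h using 1
  rw [← ENNReal.ofReal_toReal (a := 16 * (a * (a + a₁)) * (b * (b + b₁))) (by finiteness)]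
  simp only [mul_pow, ENNReal.toReal_mul, ENNReal.toReal_add ha ha₁, ENNReal.toReal_add hb hb₁,
    rpow_one_div_four_pow_four ENNReal.toReal_nonneg,
    rpow_one_div_four_pow_four (add_nonneg ENNReal.toReal_nonneg ENNReal.toReal_nonneg)]
  norm_num [mul_assoc]

theorem sq_eLpNorm_vertical_slice_le {f f₁ : ℝ × ℝ → ℝ}
    (hd₁ : ∀ x : ℝ × ℝ, HasDerivAt (fun t => f (t, x.2)) (f₁ x) x.1)
    (hf : AEStronglyMeasurable f μΩ) (hf₁ : AEStronglyMeasurable f₁ μΩ) {t : ℝ}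
    (ht : t ∈ Ioc (0:ℝ) 1) :
    eLpNorm (fun s => f (t, s)) 2 volume ^ 2 ≤
      2 * eLpNorm f 2 μΩ * (eLpNorm f 2 μΩ + eLpNorm f₁ 2 μΩ) := by
  rw [sq_eLpNorm_two]
  calc ∫⁻ s, ‖f (t, s)‖ₑ ^ 2
      ≤ ∫⁻ s, ∫⁻ τ in Ioc (0:ℝ) 1, (‖f (τ, s)‖ₑ ^ 2 + 2 * (‖f (τ, s)‖ₑ * ‖f₁ (τ, s)‖ₑ)) :=
        lintegral_mono fun s => enorm_sq_le_lintegral_Ioc_zero_one (fun τ => hd₁ (τ, s)) ht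
    _ = ∫⁻ x, (‖f x‖ₑ ^ 2 + 2 * (‖f x‖ₑ * ‖f₁ x‖ₑ)) ∂μΩ :=
        (lintegral_prod_symm _ ((hf.enorm.pow_const 2).add
          ((hf.enorm.mul hf₁.enorm).const_mul 2))).symm
    _ = eLpNorm f 2 μΩ ^ 2 + 2 * ∫⁻ x, ‖f x‖ₑ * ‖f₁ x‖ₑ ∂μΩ := by
        rw [lintegral_add_left' (hf.enorm.pow_const 2),
          lintegral_const_mul' _ _ ENNReal.ofNat_ne_top, sq_eLpNorm_two]
    _ ≤ 2 * eLpNorm f 2 μΩ ^ 2 + 2 * (eLpNorm f 2 μΩ * eLpNorm f₁ 2 μΩ) := by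
        grw [lintegral_enorm_mul_le_eLpNorm_mul_eLpNorm hf hf₁]
        gcongr
        exact le_mul_of_one_le_left' one_le_two
    _ = _ := by ring

theorem eLpNorm_top_le_of_forall_mem_strip {f : ℝ × ℝ → ℝ} {C : ℝ≥0∞}
    (h : ∀ t ∈ Ioc (0:ℝ) 1, ∀ y, ‖f (t, y)‖ₑ ≤ C) : eLpNorm f ⊤ μΩ ≤ C := by
  rw [eLpNorm_exponent_top]
  refine eLpNormEssSup_le_of_ae_enorm_bound ?_
  filter_upwards [Measure.quasiMeasurePreserving_fst.ae (ae_restrict_mem measurableSet_Ioc)]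
    with x hx
  exact h x.1 hx x.2

/-- Anisotropic L^∞ bound on Ω = 𝕋 × ℝ: for f ∈ H²(Ω),
‖f‖_{L^∞} ≤ C ‖f‖^{1/4} (‖f‖+‖∂₁f‖)^{1/4} ‖∂₂f‖^{1/4} (‖∂₂f‖+‖∂₁∂₂f‖)^{1/4}. -/
theorem linfty_anisotropic :
    ∃ C : ℝ, 0 < C ∧ ∀ (f f1 f2 f11 f12 f22 : ℝ × ℝ → ℝ),
      (∀ x : ℝ × ℝ, f (x.1 + 1, x.2) = f x) →
      (∀ x : ℝ × ℝ, HasDerivAt (fun t => f (t, x.2)) (f1 x) x.1) →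
      (∀ x : ℝ × ℝ, HasDerivAt (fun s => f (x.1, s)) (f2 x) x.2) →
      (∀ x : ℝ × ℝ, HasDerivAt (fun t => f1 (t, x.2)) (f11 x) x.1) →
      (∀ x : ℝ × ℝ, HasDerivAt (fun t => f2 (t, x.2)) (f12 x) x.1) →
      (∀ x : ℝ × ℝ, HasDerivAt (fun s => f2 (x.1, s)) (f22 x) x.2) →
      MemLp f 2 μΩ → MemLp f1 2 μΩ → MemLp f2 2 μΩ →
      MemLp f11 2 μΩ → MemLp f12 2 μΩ → MemLp f22 2 μΩ →
      eLpNorm f ⊤ μΩ ≤ ENNReal.ofReal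
        (C * (eLpNorm f 2 μΩ).toReal ^ ((1:ℝ)/4) *
          ((eLpNorm f 2 μΩ).toReal + (eLpNorm f1 2 μΩ).toReal) ^ ((1:ℝ)/4) *
          (eLpNorm f2 2 μΩ).toReal ^ ((1:ℝ)/4) *
          ((eLpNorm f2 2 μΩ).toReal + (eLpNorm f12 2 μΩ).toReal) ^ ((1:ℝ)/4)) := by
  refine ⟨2, two_pos, fun f f1 f2 _ f12 _ _ hd1 hd2 _ hd12 _ hf hf1 hf2 _ hf12 _ => ?_⟩
  refine eLpNorm_top_le_of_forall_mem_strip fun t ht y => le_ofReal_of_pow_four_le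
    hf.eLpNorm_ne_top hf1.eLpNorm_ne_top hf2.eLpNorm_ne_top hf12.eLpNorm_ne_top ?_
  set P := eLpNorm (fun s => f (t, s)) 2 volume
  set Q := eLpNorm (fun s => f2 (t, s)) 2 volume
  have hP : P ^ 2 ≤ 2 * eLpNorm f 2 μΩ * (eLpNorm f 2 μΩ + eLpNorm f1 2 μΩ) :=
    sq_eLpNorm_vertical_slice_le hd1 hf.1 hf1.1 ht
  have hQ : Q ^ 2 ≤ 2 * eLpNorm f2 2 μΩ * (eLpNorm f2 2 μΩ + eLpNorm f12 2 μΩ) :=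
    sq_eLpNorm_vertical_slice_le hd12 hf2.1 hf12.1 ht
  have hP_ne_top : P ≠ ∞ := by
    have : P ^ 2 ≠ ∞ := ne_top_of_le_ne_top (by finiteness) hP
    simpa using this
  have hpt : ‖f (t, y)‖ₑ ^ 2 ≤ 2 * (P * Q) :=
    enorm_sq_le_two_mul_eLpNorm_mul_eLpNorm (fun s => hd2 (t, s)) hP_ne_top y
  calc ‖f (t, y)‖ₑ ^ 4 = (‖f (t, y)‖ₑ ^ 2) ^ 2 := by ring
    _ ≤ (2 * (P * Q)) ^ 2 := by gcongr
    _ = 4 * P ^ 2 * Q ^ 2 := by ring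
    _ ≤ 4 * (2 * eLpNorm f 2 μΩ * (eLpNorm f 2 μΩ + eLpNorm f1 2 μΩ)) *
          (2 * eLpNorm f2 2 μΩ * (eLpNorm f2 2 μΩ + eLpNorm f12 2 μΩ)) := by gcongr
    _ = _ := by ring
end

section
/- Let Ω = 𝕋 × ℝ. There is a constant C such that for any f ∈ H²(Ω), the oscillation part f̃ satisfies ‖f̃‖_{L^∞(Ω)} ≤ C ‖f̃‖_{L²}^{1/4} ‖∂₁f̃‖_{L²}^{1/4} ‖∂₂f̃‖_{L²}^{1/4} ‖∂₁∂₂f̃‖_{L²}^{1/4}. -/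
/-!
Write `g = f̃`. For each `σ` the slice `g (·, σ)` is `1`-periodic with zero mean, hence vanishes
somewhere, so `g (τ, σ) ^ 2 ≤ 2 ∫₀¹ |g ∂₁g| dt`. Integrating in `σ` and using Cauchy–Schwarz gives
`‖g (τ, ·)‖²_{L²(ℝ)} ≤ 2 ‖g‖ ‖∂₁g‖` for every `τ`. The slices `∂₂g (·, σ)` have zero mean too, for
almost every `σ` (differentiate the zero mean of `g (·, σ)` in `σ`), so likewise
`‖∂₂g (τ, ·)‖² ≤ 2 ‖∂₂g‖ ‖∂₁∂₂g‖`. On the line, `g (τ, ·) ^ 2` vanishes at `-∞`, so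
`g (τ, s) ^ 2 ≤ 2 ‖g (τ, ·)‖ ‖∂₂g (τ, ·)‖`; combining the three bounds and taking fourth roots
gives the inequality with `C = 2`.
-/

open MeasureTheory Set

open Filter Topology Function

section L2

variable {α : Type*} [MeasurableSpace α] {μ : Measure α} {u v : α → ℝ}

lemma MeasureTheory.MemLp.toReal_eLpNorm_two_sq (hu : MemLp u 2 μ) :
    (eLpNorm u 2 μ).toReal ^ 2 = ∫ a, u a ^ 2 ∂μ := by
  rw [hu.eLpNorm_eq_integral_rpow_norm two_ne_zero ENNReal.ofNat_ne_top,
    ENNReal.toReal_ofReal (by positivity), ← Real.rpow_natCast, ← Real.rpow_mul (by positivity)]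
  norm_num

lemma integral_abs_mul_le_toReal_eLpNorm_two_mul (hu : MemLp u 2 μ) (hv : MemLp v 2 μ) :
    ∫ a, |u a * v a| ∂μ ≤ (eLpNorm u 2 μ).toReal * (eLpNorm v 2 μ).toReal := by
  have holder : eLpNorm (u • v) 1 μ ≤ eLpNorm u 2 μ * eLpNorm v 2 μ :=
    eLpNorm_smul_le_mul_eLpNorm (p := 2) (q := 2) hv.1 hu.1
  calc ∫ a, |u a * v a| ∂μ = (eLpNorm (u • v) 1 μ).toReal := by
        rw [eLpNorm_one_eq_lintegral_enorm, ← integral_norm_eq_lintegral_enorm (hu.1.smul hv.1)]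
        rfl
    _ ≤ (eLpNorm u 2 μ * eLpNorm v 2 μ).toReal :=
        ENNReal.toReal_mono (ENNReal.mul_ne_top hu.eLpNorm_ne_top hv.eLpNorm_ne_top) holder
    _ = _ := ENNReal.toReal_mul

end L2

section OneVariable

variable {h h' : ℝ → ℝ}

lemma HasDerivAt.fun_sq {d t : ℝ} (hd : HasDerivAt h d t) :
    HasDerivAt (fun s => h s ^ 2) (2 * (h t * d)) t :=
  (hd.fun_pow 2).congr_deriv (by push_cast; ring)

lemma continuous_of_forall_hasDerivAt_s14 (hd : ∀ t, HasDerivAt h (h' t) t) : Continuous h :=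
  continuous_iff_continuousAt.mpr fun t => (hd t).continuousAt

lemma measurable_of_forall_hasDerivAt_s14 (hd : ∀ t, HasDerivAt h (h' t) t) : Measurable h' := by
  rw [show h' = deriv h from funext fun t => (hd t).deriv.symm]
  exact measurable_deriv h

lemma Function.Periodic.of_hasDerivAt {T : ℝ} (hp : Periodic h T)
    (hd : ∀ t, HasDerivAt h (h' t) t) : Periodic h' T := fun t => by
  have := (hd (t + T)).comp_add_const t T
  rw [show (fun s => h (s + T)) = h from funext hp] at this
  exact this.unique (hd t)

lemma sq_le_two_mul_toReal_eLpNorm_mul_of_hasDerivAt (hd : ∀ t, HasDerivAt h (h' t) t)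
    (hh : MemLp h 2) (hh' : MemLp h' 2) (x : ℝ) :
    h x ^ 2 ≤ 2 * ((eLpNorm h 2).toReal * (eLpNorm h' 2).toReal) := by
  have hint : Integrable (fun s => 2 * (h s * h' s)) :=
    (hh.integrable_mul (p := 2) (q := 2) hh').const_mul 2
  have hlim : Tendsto (fun s => h s ^ 2) atBot (𝓝 0) :=
    tendsto_zero_of_hasDerivAt_of_integrableOn_Iic (a := x)
      (fun s _ => (hd s).fun_sq) hint.integrableOn hh.integrable_sq.integrableOn
  have hftc := integral_Iic_of_hasDerivAt_of_tendsto' (a := x)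
    (fun s _ => (hd s).fun_sq) hint.integrableOn hlim
  calc h x ^ 2 = ∫ s in Iic x, 2 * (h s * h' s) := by rw [hftc, sub_zero]
    _ ≤ ∫ s, |2 * (h s * h' s)| :=
        (le_abs_self _).trans (abs_integral_le_integral_abs.trans
          (setIntegral_le_integral hint.abs (.of_forall fun _ => abs_nonneg _)))
    _ = 2 * ∫ s, |h s * h' s| := by simp_rw [abs_mul (2 : ℝ), abs_two, integral_const_mul]
    _ ≤ _ := by gcongr; exact integral_abs_mul_le_toReal_eLpNorm_two_mul hh hh'

lemma sq_le_two_mul_integral_abs_mul_deriv_of_periodic {T : ℝ} (hT : 0 < T)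
    (hp : Periodic h T) (hd : ∀ t, HasDerivAt h (h' t) t)
    (hint : IntegrableOn (fun t => h t * h' t) (Ioc 0 T))
    (hmean : ∫ t in 0..T, h t = 0) (x : ℝ) :
    h x ^ 2 ≤ 2 * ∫ t in Ioc 0 T, |h t * h' t| := by
  obtain ⟨t₀, -, ht₀⟩ :=
    exists_eq_interval_average hT.ne (continuous_of_forall_hasDerivAt_s14 hd).continuousOn
  rw [interval_average_eq_div, hmean, zero_div] at ht₀
  obtain ⟨y, hy, hxy⟩ := hp.exists_mem_Ico hT x t₀
  have hper : Periodic (fun t => h t * h' t) T := fun t => by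
    simp only [hp t, hp.of_hasDerivAt hd t]
  have hII : ∀ a b, IntervalIntegrable (fun t => h t * h' t) volume a b :=
    hper.intervalIntegrable₀ hT.ne' ((intervalIntegrable_iff_integrableOn_Ioc_of_le hT.le).mpr hint)
  have hftc := intervalIntegral.integral_eq_sub_of_hasDerivAt (a := t₀) (b := y)
    (fun s _ => (hd s).fun_sq) ((hII _ _).const_mul 2)
  calc h x ^ 2 = ∫ t in t₀..y, 2 * (h t * h' t) := by rw [hftc, hxy, ht₀]; ring
    _ ≤ 2 * ∫ t in t₀..t₀ + T, |h t * h' t| := by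
        rw [intervalIntegral.integral_const_mul]
        gcongr
        refine (le_abs_self _).trans
          ((intervalIntegral.abs_integral_le_integral_abs hy.1).trans ?_)
        exact intervalIntegral.integral_mono_interval le_rfl hy.1 hy.2.le
          (.of_forall fun _ => abs_nonneg _) (hII _ _).abs
    _ = 2 * ∫ t in Ioc 0 T, |h t * h' t| := by
        have hper_abs : Periodic (fun t => |h t * h' t|) T := fun t => by simp only [hper t]
        rw [hper_abs.intervalIntegral_add_eq t₀ 0, zero_add, intervalIntegral.integral_of_le hT.le]

end OneVariable

lemma ae_eq_zero_of_forall_intervalIntegral_eq_zero {E : Type*} [NormedAddCommGroup E]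
    [NormedSpace ℝ E] [CompleteSpace E] {M : ℝ → E} (hM : LocallyIntegrable M)
    (hM0 : ∀ a b, ∫ t in a..b, M t = 0) : M =ᵐ[volume] 0 := by
  filter_upwards [LocallyIntegrable.ae_hasDerivAt_integral hM] with x hx
  have hx0 := hx 0
  simp only [hM0] at hx0
  exact hx0.unique (hasDerivAt_const x 0)

lemma ae_integral_eq_zero_of_hasDerivAt_snd {α : Type*} [MeasurableSpace α] {ν : Measure α}
    [SFinite ν] {g g₂ : α × ℝ → ℝ}
    (hd : ∀ x, HasDerivAt (fun s => g (x.1, s)) (g₂ x) x.2)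
    (hg₂ : ∀ a b, Integrable g₂ (ν.prod (volume.restrict (Ioc a b))))
    (hg : ∀ y, Integrable (fun t => g (t, y)) ν) (hmean : ∀ y, ∫ t, g (t, y) ∂ν = 0) :
    ∀ᵐ σ, ∫ t, g₂ (t, σ) ∂ν = 0 := by
  have hswap (a b : ℝ) : Integrable (fun z : ℝ × α => g₂ (z.2, z.1))
      ((volume.restrict (Ioc a b)).prod ν) := (hg₂ a b).swap
  refine ae_eq_zero_of_forall_intervalIntegral_eq_zero ?_ fun a b => ?_
  · refine (locallyIntegrable_iff (μ := volume)).mpr fun k hk => ?_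
    obtain ⟨r, hr⟩ := hk.isBounded.subset_closedBall 0
    refine IntegrableOn.mono_set (hswap (-r - 1) r).integral_prod_left (hr.trans ?_)
    rw [Real.closedBall_eq_Icc, zero_sub, zero_add]
    exact Icc_subset_Ioc (by linarith) le_rfl
  wlog hab : a ≤ b
  · rw [intervalIntegral.integral_symm, this hd hg₂ hg hmean hswap b a (le_of_not_ge hab),
      neg_zero]
  have hftc : ∀ᵐ t ∂ν, ∫ σ in Ioc a b, g₂ (t, σ) = g (t, b) - g (t, a) := by
    filter_upwards [(hg₂ a b).prod_right_ae] with t ht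
    rw [← intervalIntegral.integral_of_le hab]
    exact intervalIntegral.integral_eq_sub_of_hasDerivAt (f := fun s => g (t, s))
      (fun σ _ => hd (t, σ)) ((intervalIntegrable_iff_integrableOn_Ioc_of_le hab).mpr ht)
  calc ∫ σ in a..b, ∫ t, g₂ (t, σ) ∂ν
      = ∫ t, (∫ σ in Ioc a b, g₂ (t, σ)) ∂ν := by
        rw [intervalIntegral.integral_of_le hab]
        exact integral_integral_swap (f := fun σ t => g₂ (t, σ)) (hswap a b)
    _ = ∫ t, (g (t, b) - g (t, a)) ∂ν := integral_congr_ae hftc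
    _ = 0 := by rw [integral_sub (hg b) (hg a), hmean, hmean, sub_self]

section Strip

variable {u u' : ℝ × ℝ → ℝ}

lemma MeasureTheory.MemLp.integrable_prod_restrict_Ioc (hu : MemLp u 2 μΩ) (a b : ℝ) :
    Integrable u ((volume.restrict (Ioc 0 1)).prod (volume.restrict (Ioc a b))) :=
  (hu.mono_measure (Measure.prod_mono le_rfl Measure.restrict_le_self)).integrable one_le_two

lemma apply_fst_add_one_of_hasDerivAt_snd (hper : ∀ x : ℝ × ℝ, u (x.1 + 1, x.2) = u x)
    (hd : ∀ x : ℝ × ℝ, HasDerivAt (fun s => u (x.1, s)) (u' x) x.2) (x : ℝ × ℝ) :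
    u' (x.1 + 1, x.2) = u' x := by
  have h := hd (x.1 + 1, x.2)
  simp only [show ∀ s, u (x.1 + 1, s) = u (x.1, s) from fun s => hper (x.1, s)] at h
  exact h.unique (hd x)

lemma memLp_slice_and_sq_toReal_eLpNorm_slice_le
    (hper : ∀ x : ℝ × ℝ, u (x.1 + 1, x.2) = u x)
    (hd : ∀ x : ℝ × ℝ, HasDerivAt (fun t => u (t, x.2)) (u' x) x.1)
    (hmean : ∀ᵐ σ, ∫ t in Ioc 0 1, u (t, σ) = 0)
    (hslice : ∀ τ, AEStronglyMeasurable (fun σ => u (τ, σ)))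
    (hu : MemLp u 2 μΩ) (hu' : MemLp u' 2 μΩ) (τ : ℝ) :
    MemLp (fun σ => u (τ, σ)) 2 ∧ (eLpNorm (fun σ => u (τ, σ)) 2).toReal ^ 2 ≤
      2 * ((eLpNorm u 2 μΩ).toReal * (eLpNorm u' 2 μΩ).toReal) := by
  have huu' : Integrable (fun x => u x * u' x) μΩ := hu.integrable_mul (p := 2) (q := 2) hu'
  have hP : Integrable (fun σ => ∫ t in Ioc 0 1, |u (t, σ) * u' (t, σ)|) :=
    huu'.abs.swap.integral_prod_left
  have hbound : ∀ᵐ σ, u (τ, σ) ^ 2 ≤ 2 * ∫ t in Ioc 0 1, |u (t, σ) * u' (t, σ)| := by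
    filter_upwards [hmean, huu'.prod_left_ae] with σ hσ hint
    refine sq_le_two_mul_integral_abs_mul_deriv_of_periodic one_pos (fun t => hper (t, σ))
      (fun t => hd (t, σ)) hint ?_ τ
    rwa [intervalIntegral.integral_of_le zero_le_one]
  have hsq : Integrable (fun σ => u (τ, σ) ^ 2) := by
    refine (hP.const_mul 2).mono' ((hslice τ).pow 2) ?_
    filter_upwards [hbound] with σ hσ
    rwa [Real.norm_of_nonneg (sq_nonneg _)]
  have hslice_memLp := (memLp_two_iff_integrable_sq (hslice τ)).mpr hsq
  refine ⟨hslice_memLp, ?_⟩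
  calc _ = ∫ σ, u (τ, σ) ^ 2 := hslice_memLp.toReal_eLpNorm_two_sq
    _ ≤ ∫ σ, 2 * ∫ t in Ioc 0 1, |u (t, σ) * u' (t, σ)| :=
        integral_mono_ae hsq (hP.const_mul 2) hbound
    _ = 2 * ∫ x, |u x * u' x| ∂μΩ := by
        rw [integral_const_mul, μΩ, integral_prod_symm _ huu'.abs]
    _ ≤ _ := by gcongr; exact integral_abs_mul_le_toReal_eLpNorm_two_mul hu hu'

end Strip

section Oscillation

variable {f : ℝ × ℝ → ℝ}

lemma osc_apply_fst_add_one (hper : ∀ x : ℝ × ℝ, f (x.1 + 1, x.2) = f x) (x : ℝ × ℝ) :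
    osc f (x.1 + 1, x.2) = osc f x := by
  simp only [osc, hper]

lemma integrableOn_osc_slice {y : ℝ} (hint : IntegrableOn (fun t => f (t, y)) (Ioc 0 1)) :
    IntegrableOn (fun t => osc f (t, y)) (Ioc 0 1) :=
  hint.sub (integrableOn_const (C := havg f y) measure_Ioc_lt_top.ne)

lemma setIntegral_osc_slice_eq_zero {y : ℝ}
    (hint : IntegrableOn (fun t => f (t, y)) (Ioc 0 1)) :
    ∫ t in Ioc 0 1, osc f (t, y) = 0 := by
  have hconst : IntegrableOn (fun _ => havg f y) (Ioc (0:ℝ) 1) :=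
    integrableOn_const measure_Ioc_lt_top.ne
  simp only [osc]
  rw [integral_sub hint hconst, setIntegral_const, havg,
    intervalIntegral.integral_of_le zero_le_one]
  simp

end Oscillation

lemma abs_le_two_mul_prod_rpow_quarter {y A B a b c d : ℝ}
    (ha : 0 ≤ a) (hb : 0 ≤ b) (hc : 0 ≤ c) (hd : 0 ≤ d)
    (hy : y ^ 2 ≤ 2 * (A * B)) (hA : A ^ 2 ≤ 2 * (a * b)) (hB : B ^ 2 ≤ 2 * (c * d)) :
    |y| ≤ 2 * a ^ ((1:ℝ)/4) * b ^ ((1:ℝ)/4) * c ^ ((1:ℝ)/4) * d ^ ((1:ℝ)/4) := by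
  have quarter_pow_four {x : ℝ} (hx : 0 ≤ x) : (x ^ ((1:ℝ)/4)) ^ 4 = x := by
    rw [← Real.rpow_natCast, ← Real.rpow_mul hx]; norm_num
  rw [← pow_le_pow_iff_left₀ (abs_nonneg y) (by positivity) four_ne_zero]
  calc |y| ^ 4 = (y ^ 2) ^ 2 := by rw [pow_abs, abs_of_nonneg (by positivity)]; ring
    _ ≤ (2 * (A * B)) ^ 2 := pow_le_pow_left₀ (sq_nonneg y) hy 2
    _ = 4 * A ^ 2 * B ^ 2 := by ring
    _ ≤ 4 * (2 * (a * b)) * (2 * (c * d)) := by gcongr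
    _ = _ := by simp only [mul_pow, quarter_pow_four, ha, hb, hc, hd]; ring

/-- Anisotropic L^∞ bound for the oscillation part:
‖f̃‖_{L^∞(Ω)} ≤ C ‖f̃‖^{1/4} ‖∂₁f̃‖^{1/4} ‖∂₂f̃‖^{1/4} ‖∂₁∂₂f̃‖^{1/4}. -/
theorem osc_linfty_anisotropic :
    ∃ C : ℝ, 0 < C ∧ ∀ (f t1 t2 t12 : ℝ × ℝ → ℝ),
      (∀ x : ℝ × ℝ, f (x.1 + 1, x.2) = f x) →
      (∀ y : ℝ, IntegrableOn (fun t => f (t, y)) (Ioc (0:ℝ) 1)) →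
      (∀ x : ℝ × ℝ, HasDerivAt (fun t => osc f (t, x.2)) (t1 x) x.1) →
      (∀ x : ℝ × ℝ, HasDerivAt (fun s => osc f (x.1, s)) (t2 x) x.2) →
      (∀ x : ℝ × ℝ, HasDerivAt (fun t => t2 (t, x.2)) (t12 x) x.1) →
      MemLp (osc f) 2 μΩ → MemLp t1 2 μΩ → MemLp t2 2 μΩ → MemLp t12 2 μΩ →
      eLpNorm (osc f) ⊤ μΩ ≤ ENNReal.ofReal
        (C * (eLpNorm (osc f) 2 μΩ).toReal ^ ((1:ℝ)/4) *
          (eLpNorm t1 2 μΩ).toReal ^ ((1:ℝ)/4) *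
          (eLpNorm t2 2 μΩ).toReal ^ ((1:ℝ)/4) *
          (eLpNorm t12 2 μΩ).toReal ^ ((1:ℝ)/4)) := by
  refine ⟨2, two_pos, fun f t1 t2 t12 hper hint hd1 hd2 hd12 hL0 hL1 hL2 hL12 => ?_⟩
  have hg_mean := fun y => setIntegral_osc_slice_eq_zero (hint y)
  have ht2_mean : ∀ᵐ σ, ∫ t in Ioc 0 1, t2 (t, σ) = 0 :=
    ae_integral_eq_zero_of_hasDerivAt_snd hd2 hL2.integrable_prod_restrict_Ioc
      (fun y => integrableOn_osc_slice (hint y)) hg_mean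
  have hg := memLp_slice_and_sq_toReal_eLpNorm_slice_le (osc_apply_fst_add_one hper) hd1
    (.of_forall hg_mean)
    (fun τ => (continuous_of_forall_hasDerivAt_s14 fun σ => hd2 (τ, σ)).aestronglyMeasurable) hL0 hL1
  have ht2 := memLp_slice_and_sq_toReal_eLpNorm_slice_le
    (apply_fst_add_one_of_hasDerivAt_snd (osc_apply_fst_add_one hper) hd2) hd12 ht2_mean
    (fun τ => (measurable_of_forall_hasDerivAt_s14 (h := fun s => osc f (τ, s))
      fun σ => hd2 (τ, σ)).aestronglyMeasurable) hL2 hL12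
  refine eLpNorm_exponent_top.trans_le (eLpNormEssSup_le_of_ae_bound (.of_forall fun x => ?_))
  obtain ⟨hg_slice, hg_le⟩ := hg x.1
  obtain ⟨ht2_slice, ht2_le⟩ := ht2 x.1
  exact abs_le_two_mul_prod_rpow_quarter ENNReal.toReal_nonneg ENNReal.toReal_nonneg
    ENNReal.toReal_nonneg ENNReal.toReal_nonneg
    (sq_le_two_mul_toReal_eLpNorm_mul_of_hasDerivAt (fun σ => hd2 (x.1, σ)) hg_slice ht2_slice x.2)
    hg_le ht2_le
end
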